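/- Let A be an m×n real matrix and e 1, …, e n the standard basis vectors of ℝ^n. Let H : ℕ → (n×n real matrices), p v : ℕ → vectors satisfy the implicit QR recursion: H 1 = I, and for every k with 1 ≤ k ≤ i: p k = (H k)ᵀ *ᵥ (e k), v k = A *ᵥ (p k), δ k = (e k) ⬝ᵥ (H k *ᵥ (Aᵀ *ᵥ (v k))) ≠ 0, and H (k+1) = H k - (1/δ k) • vecMulVec (H k *ᵥ (Aᵀ *ᵥ (v k))) ((H k)ᵀ *ᵥ (e k)). Then the scaling vectors are mutually orthogonal: (v j) ⬝ᵥ (v k) = 0 for all 1 ≤ j < k ≤ i. -/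

import Mathlib

/-!
Each step of the recursion is a rank-one update `H ↦ H - (H u)(Hᵀ w)ᵀ / (w ⬝ H u)` with
`u = Aᵀ v k`, `w = e k`. Such an update annihilates `u` and keeps the kernel of `H`, so by
induction `H k` annihilates `Aᵀ v j` for every `j < k`. Since `v k = A Hₖᵀ e k`, this gives
`v j ⬝ v k = e k ⬝ Hₖ Aᵀ v j = 0`.
-/

open Matrix

section AbsUpdate

variable {ι K : Type*} [Fintype ι] [Field K]

/-- The rank-one update of one step of the scaled ABS algorithm. -/
def absUpdate (H : Matrix ι ι K) (u w : ι → K) : Matrix ι ι K :=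
  H - (1 / (w ⬝ᵥ (H *ᵥ u))) • vecMulVec (H *ᵥ u) (Hᵀ *ᵥ w)

theorem absUpdate_mulVec (H : Matrix ι ι K) (u w x : ι → K) :
    absUpdate H u w *ᵥ x = H *ᵥ x - ((w ⬝ᵥ (H *ᵥ x)) / (w ⬝ᵥ (H *ᵥ u))) • (H *ᵥ u) := by
  rw [absUpdate, sub_mulVec, smul_mulVec, vecMulVec_mulVec, op_smul_eq_smul, smul_smul,
    dotProduct_comm _ x, dotProduct_transpose_mulVec, one_div_mul_eq_div]

theorem absUpdate_mulVec_self {H : Matrix ι ι K} {u w : ι → K} (h : w ⬝ᵥ (H *ᵥ u) ≠ 0) :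
    absUpdate H u w *ᵥ u = 0 := by
  rw [absUpdate_mulVec, div_self h, one_smul, sub_self]

theorem absUpdate_mulVec_of_mulVec_eq_zero {H : Matrix ι ι K} (u w : ι → K) {x : ι → K}
    (hx : H *ᵥ x = 0) : absUpdate H u w *ᵥ x = 0 := by
  rw [absUpdate_mulVec, hx, dotProduct_zero, zero_div, zero_smul, sub_zero]

theorem absUpdate_iterate_mulVec_eq_zero {i : ℕ} {H : ℕ → Matrix ι ι K} {u w : ℕ → ι → K}
    (hrec : ∀ k, 1 ≤ k → k ≤ i →
      w k ⬝ᵥ (H k *ᵥ u k) ≠ 0 ∧ H (k + 1) = absUpdate (H k) (u k) (w k))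
    {j k : ℕ} (hj : 1 ≤ j) (hjk : j < k) (hk : k ≤ i + 1) : H k *ᵥ u j = 0 := by
  induction k with
  | zero => omega
  | succ k ih =>
    obtain ⟨hδ, hH⟩ := hrec k (by omega) (by omega)
    rw [hH]
    rcases (Nat.lt_succ_iff.mp hjk).eq_or_lt with rfl | hjk
    · exact absUpdate_mulVec_self hδ
    · exact absUpdate_mulVec_of_mulVec_eq_zero _ _ (ih hjk (by omega))

end AbsUpdate

theorem implicit_qr_scaling_vectors_orthogonal_general {m n : ℕ} (i : ℕ)
    (A : Matrix (Fin m) (Fin n) ℝ)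
    (e : ℕ → Fin n → ℝ)
    (H : ℕ → Matrix (Fin n) (Fin n) ℝ)
    (p : ℕ → Fin n → ℝ) (v : ℕ → Fin m → ℝ)
    (hrec : ∀ k, 1 ≤ k → k ≤ i →
      p k = (H k)ᵀ *ᵥ e k ∧
      v k = A *ᵥ p k ∧
      e k ⬝ᵥ (H k *ᵥ (Aᵀ *ᵥ v k)) ≠ 0 ∧
      H (k + 1) = H k - (1 / (e k ⬝ᵥ (H k *ᵥ (Aᵀ *ᵥ v k)))) •
        vecMulVec (H k *ᵥ (Aᵀ *ᵥ v k)) ((H k)ᵀ *ᵥ e k)) :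
    ∀ j k, 1 ≤ j → j < k → k ≤ i → v j ⬝ᵥ v k = 0 := by
  intro j k hj hjk hk
  have hker : H k *ᵥ (Aᵀ *ᵥ v j) = 0 :=
    absUpdate_iterate_mulVec_eq_zero (u := fun k => Aᵀ *ᵥ v k)
      (fun k hk1 hki => ⟨(hrec k hk1 hki).2.2.1, (hrec k hk1 hki).2.2.2⟩) hj hjk (by omega)
  obtain ⟨hp, hv, -⟩ := hrec k (by omega) hk
  calc v j ⬝ᵥ v k = ((H k)ᵀ *ᵥ e k) ⬝ᵥ (Aᵀ *ᵥ v j) := by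
        rw [hv, hp, dotProduct_transpose_mulVec]
    _ = e k ⬝ᵥ (H k *ᵥ (Aᵀ *ᵥ v j)) := by rw [dotProduct_comm, dotProduct_transpose_mulVec]
    _ = 0 := by rw [hker, dotProduct_zero]

theorem implicit_qr_scaling_vectors_orthogonal {m n : ℕ} (i : ℕ)
    (A : Matrix (Fin m) (Fin n) ℝ)
    (e : ℕ → Fin n → ℝ)
    (he : ∀ k, 1 ≤ k → k ≤ i →
      e k = fun j : Fin n => if (j : ℕ) + 1 = k then (1 : ℝ) else 0)
    (H : ℕ → Matrix (Fin n) (Fin n) ℝ)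
    (p : ℕ → Fin n → ℝ) (v : ℕ → Fin m → ℝ)
    (hH1 : H 1 = 1)
    (hrec : ∀ k, 1 ≤ k → k ≤ i →
      p k = (H k)ᵀ *ᵥ e k ∧
      v k = A *ᵥ p k ∧
      e k ⬝ᵥ (H k *ᵥ (Aᵀ *ᵥ v k)) ≠ 0 ∧
      H (k + 1) = H k - (1 / (e k ⬝ᵥ (H k *ᵥ (Aᵀ *ᵥ v k)))) •
        vecMulVec (H k *ᵥ (Aᵀ *ᵥ v k)) ((H k)ᵀ *ᵥ e k)) :
    ∀ j k, 1 ≤ j → j < k → k ≤ i → v j ⬝ᵥ v k = 0 :=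
  implicit_qr_scaling_vectors_orthogonal_general i A e H p v hrec
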